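/- For any integer r ≥ 2, any function f : {0,1,…,r−1}ⁿ → ℝ and any k = 1,…,n, one has Σ_{S : |S| = k} |f̂(S)|² ≤ C_r^{2k} · ‖f‖_{4/3}², where C_r = (9/2)·r³. -/

import Mathlib

/-
The level-`k` Fourier mass `M` of `f` is `‖W‖₂²` for the projection `W = ∑_{|S| = k} f̂(S) u_S`.
Pairing `W` with `f` and Hölder with exponents `4/3` and `4` give `‖W‖₂² = ⟨f, W⟩ ≤ ‖f‖_{4/3} ‖W‖₄`,
and the `(2,4)`-hypercontractive bound `‖W‖₄⁴ ≤ (16 r)^k ‖W‖₂⁴` for functions of degree `≤ k`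
then yields `M² ≤ (16 r)^k ‖f‖_{4/3}⁴`; finally `16 r ≤ C_r⁴`.

The hypercontractive bound is proved by induction on `n`. Split off the first coordinate:
`F (x₀, x) = G x + D x₀ x`, where `G` collects the characters not depending on `x₀`. Then `G` has
degree `≤ k`, every `D x₀` has degree `≤ k - 1`, and `∑_{x₀} D x₀ x = 0`, which kills the cross term
`4 |G|² Re (G D̄)` in the expansion of `|G + D|⁴`; the remaining cross term is handled by
Cauchy–Schwarz.
-/

open scoped Classical
open Finset

/-- Probability of an event under the uniform distribution on `{0,1,…,r-1}ⁿ`. -/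
noncomputable def prr {n r : ℕ} (P : (Fin n → Fin r) → Prop) : ℝ :=
  ((Finset.univ.filter P).card : ℝ) / r ^ n

/-- Expectation of `g(X)` for `X` uniform on `{0,1,…,r-1}ⁿ`. -/
noncomputable def expecr {n r : ℕ} (g : (Fin n → Fin r) → ℝ) : ℝ :=
  (∑ x, g x) / r ^ n

/-- Variance of `g(X)` for `X` uniform on `{0,1,…,r-1}ⁿ`. -/
noncomputable def varr {n r : ℕ} (g : (Fin n → Fin r) → ℝ) : ℝ :=
  expecr fun x => (g x - expecr g) ^ 2

/-- The `α`-quantile of `f(X)`. -/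
noncomputable def quantr {n r : ℕ} (f : (Fin n → Fin r) → ℝ) (α : ℝ) : ℝ :=
  sInf {z : ℝ | α ≤ prr fun x => f x ≤ z}

/-- `Δᵢ f(x) = f(x) - (1/r) ∑_{j=0}^{r-1} f(x_{i,j})` where `x_{i,j}` replaces the `i`-th
coordinate of `x` by `x_i ⊕ j` (addition modulo `r`). -/
noncomputable def Δi {n r : ℕ} (f : (Fin n → Fin r) → ℝ) (i : Fin n)
    (x : Fin n → Fin r) : ℝ :=
  f x - (1 / r) * ∑ j : Fin r, f (Function.update x i (x i + j))

/-- `ω = e^{2πi/r}`. -/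
noncomputable def omg (r : ℕ) : ℂ := Complex.exp (2 * Real.pi * Complex.I / r)

/-- The character `u_S(x) = ω^{⟨S,x⟩}` with `⟨S,x⟩ = ∑ᵢ Sᵢxᵢ mod r`. -/
noncomputable def uS {n r : ℕ} (S x : Fin n → Fin r) : ℂ :=
  omg r ^ ((∑ i, (S i).val * (x i).val) % r)

/-- `∫ g = r^{-n} ∑_x g(x)`. -/
noncomputable def intg {n r : ℕ} (g : (Fin n → Fin r) → ℂ) : ℂ :=
  (∑ x, g x) / r ^ n

/-- Fourier coefficient `ĝ(S) = ∫ g ⋅ conj(u_S)`. -/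
noncomputable def fhat {n r : ℕ} (g : (Fin n → Fin r) → ℂ) (S : Fin n → Fin r) : ℂ :=
  intg fun x => g x * (starRingEnd ℂ) (uS S x)

/-- `‖g‖_q = (∫ |g|^q)^{1/q}`. -/
noncomputable def Lnorm {n r : ℕ} (q : ℝ) (g : (Fin n → Fin r) → ℂ) : ℝ :=
  ((∑ x, ‖g x‖ ^ q) / r ^ n) ^ (1 / q)

/-- `|S|`: the number of nonzero components of `S`. -/
noncomputable def suppCard {n r : ℕ} [NeZero r] (S : Fin n → Fin r) : ℕ :=
  (Finset.univ.filter fun i => S i ≠ 0).card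

section Characters

variable {r : ℕ} [NeZero r]

lemma isPrimitiveRoot_omg : IsPrimitiveRoot (omg r) r := by
  simpa [omg, mul_comm, mul_div_assoc] using Complex.isPrimitiveRoot_exp r (NeZero.ne r)

lemma conj_omg_pow (m : ℕ) : starRingEnd ℂ (omg r ^ m) = (omg r)⁻¹ ^ m := by
  rw [map_pow, Complex.inv_eq_conj (isPrimitiveRoot_omg.norm'_eq_one (NeZero.ne r))]

lemma sum_omg_pow_mul_conj (s t : Fin r) :
    ∑ j : Fin r, omg r ^ (s.val * j.val) * starRingEnd ℂ (omg r ^ (t.val * j.val)) =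
      if s = t then (r : ℂ) else 0 := by
  have hω := isPrimitiveRoot_omg (r := r)
  have hω0 : omg r ≠ 0 := hω.ne_zero (NeZero.ne r)
  set μ := omg r ^ s.val / omg r ^ t.val with hμdef
  have hμ : ∀ j : Fin r, omg r ^ (s.val * j.val) * starRingEnd ℂ (omg r ^ (t.val * j.val)) =
      μ ^ j.val := fun j => by
    rw [conj_omg_pow, hμdef, div_pow, ← pow_mul, ← pow_mul, div_eq_mul_inv, inv_pow]
  have hμ1 : μ = 1 ↔ s = t := by
    rw [div_eq_one_iff_eq (pow_ne_zero _ hω0), Fin.ext_iff]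
    exact ⟨hω.pow_inj s.isLt t.isLt, fun h => h ▸ rfl⟩
  simp only [hμ, Fin.sum_univ_eq_sum_range (μ ^ ·) r]
  split_ifs with hst
  · simp [hμ1.2 hst]
  · have hμr : μ ^ r = 1 := by
      rw [div_pow, ← pow_mul, ← pow_mul, mul_comm s.val, mul_comm t.val, pow_mul, pow_mul,
        hω.pow_eq_one, one_pow, one_pow, div_one]
    rw [geom_sum_eq (mt hμ1.1 hst), hμr, sub_self, zero_div]

lemma sum_omg_pow_mul (b : Fin r) :
    ∑ j : Fin r, omg r ^ (b.val * j.val) = if b = 0 then (r : ℂ) else 0 := by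
  simpa using sum_omg_pow_mul_conj b 0

lemma uS_eq_prod {n : ℕ} (S x : Fin n → Fin r) :
    uS S x = ∏ i, omg r ^ ((S i).val * (x i).val) := by
  rw [uS, ← pow_eq_pow_mod _ isPrimitiveRoot_omg.pow_eq_one, Finset.prod_pow_eq_pow_sum]

lemma uS_cons {n : ℕ} (b x₀ : Fin r) (S x : Fin n → Fin r) :
    uS (Fin.cons b S : Fin (n + 1) → Fin r) (Fin.cons x₀ x) =
      omg r ^ (b.val * x₀.val) * uS S x := by
  simp [uS_eq_prod, Fin.prod_univ_succ]

lemma sum_uS_mul_conj {n : ℕ} (S T : Fin n → Fin r) :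
    ∑ x : Fin n → Fin r, uS S x * starRingEnd ℂ (uS T x) = if S = T then (r : ℂ) ^ n else 0 := by
  simp_rw [uS_eq_prod, map_prod, ← Finset.prod_mul_distrib]
  rw [← Fintype.prod_sum (fun i (j : Fin r) =>
    omg r ^ ((S i).val * j.val) * starRingEnd ℂ (omg r ^ ((T i).val * j.val)))]
  simp_rw [sum_omg_pow_mul_conj]
  split_ifs with h
  · simp [h]
  · obtain ⟨i, hi⟩ := Function.ne_iff.mp h
    exact Finset.prod_eq_zero (Finset.mem_univ i) (if_neg hi)

end Characters

section FourierSum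

variable {r n : ℕ} [NeZero r]

noncomputable def fourierSum (a : (Fin n → Fin r) → ℂ) (x : Fin n → Fin r) : ℂ :=
  ∑ S, a S * uS S x

def FourierDegreeLE (k : ℕ) (a : (Fin n → Fin r) → ℂ) : Prop :=
  ∀ S, a S ≠ 0 → suppCard S ≤ k

lemma sum_mul_conj_fourierSum (g a : (Fin n → Fin r) → ℂ) :
    ∑ x, g x * starRingEnd ℂ (fourierSum a x) =
      (r : ℂ) ^ n * ∑ S, fhat g S * starRingEnd ℂ (a S) := by
  have hN : (r : ℂ) ^ n ≠ 0 := pow_ne_zero _ (Nat.cast_ne_zero.2 (NeZero.ne r))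
  have hfhat : ∀ S, (r : ℂ) ^ n * fhat g S = ∑ x, g x * starRingEnd ℂ (uS S x) :=
    fun S => mul_div_cancel₀ _ hN
  simp_rw [Finset.mul_sum, ← mul_assoc, hfhat, Finset.sum_mul, fourierSum, map_sum, map_mul,
    Finset.mul_sum]
  rw [Finset.sum_comm]
  exact Finset.sum_congr rfl fun _ _ => Finset.sum_congr rfl fun _ _ => by ring

lemma fhat_fourierSum (a : (Fin n → Fin r) → ℂ) : fhat (fourierSum a) = a := by
  have hN : (r : ℂ) ^ n ≠ 0 := pow_ne_zero _ (Nat.cast_ne_zero.2 (NeZero.ne r))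
  funext S
  simp_rw [fhat, intg, fourierSum, Finset.sum_mul, mul_assoc]
  rw [Finset.sum_comm]
  simp_rw [← Finset.mul_sum, sum_uS_mul_conj, mul_ite, mul_zero, Finset.sum_ite_eq',
    Finset.mem_univ, if_true, mul_div_cancel_right₀ _ hN]

lemma sum_norm_fourierSum_sq (a : (Fin n → Fin r) → ℂ) :
    ∑ x, ‖fourierSum a x‖ ^ 2 = (r : ℝ) ^ n * ∑ S, ‖a S‖ ^ 2 := by
  have h := sum_mul_conj_fourierSum (fourierSum a) a
  rw [fhat_fourierSum] at h
  simp only [Complex.mul_conj'] at h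
  exact_mod_cast h

lemma suppCard_cons (b : Fin r) (S : Fin n → Fin r) :
    suppCard (Fin.cons b S : Fin (n + 1) → Fin r) = (if b = 0 then 0 else 1) + suppCard S := by
  simp only [suppCard, Finset.card_filter, Fin.sum_univ_succ, Fin.cons_zero, Fin.cons_succ]
  by_cases hb : b = 0 <;> simp [hb]

lemma fourierSum_eq_const_of_degreeLE_zero {a : (Fin n → Fin r) → ℂ} (ha : FourierDegreeLE 0 a)
    (x : Fin n → Fin r) : fourierSum a x = a 0 := by
  rw [fourierSum, Finset.sum_eq_single 0]
  · simp [uS]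
  · intro S _ hS
    by_contra h
    refine hS (funext fun i => ?_)
    have := Nat.le_zero.1 (ha S (left_ne_zero_of_mul h))
    simp only [suppCard, Finset.card_eq_zero, Finset.filter_eq_empty_iff] at this
    simpa using this (Finset.mem_univ i)
  · simp

end FourierSum

lemma Fintype.sum_fin_succ_pi {α M : Type*} [Fintype α] [AddCommMonoid M] {n : ℕ}
    (h : (Fin (n + 1) → α) → M) : ∑ x, h x = ∑ x : Fin n → α, ∑ x₀, h (Fin.cons x₀ x) := by
  rw [← (Fin.consEquiv fun _ => α).sum_comp, Fintype.sum_prod_type, Finset.sum_comm]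
  rfl

section Slices

variable {r n : ℕ} [NeZero r]

lemma fourierSum_cons (a : (Fin (n + 1) → Fin r) → ℂ) (x₀ : Fin r) (x : Fin n → Fin r) :
    fourierSum a (Fin.cons x₀ x) =
      fourierSum (fun S => ∑ b, omg r ^ (b.val * x₀.val) * a (Fin.cons b S)) x := by
  simp_rw [fourierSum, Fintype.sum_fin_succ_pi (fun S => a S * uS S (Fin.cons x₀ x)), uS_cons,
    Finset.sum_mul]
  exact Finset.sum_congr rfl fun _ _ => Finset.sum_congr rfl fun _ _ => by ring

lemma fourierSum_cons_eq_add (a : (Fin (n + 1) → Fin r) → ℂ) (x₀ : Fin r) (x : Fin n → Fin r) :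
    fourierSum a (Fin.cons x₀ x) = fourierSum (fun S => a (Fin.cons 0 S)) x +
      fourierSum (fun S => ∑ b ∈ univ.erase 0, omg r ^ (b.val * x₀.val) * a (Fin.cons b S)) x := by
  simp_rw [fourierSum_cons, ← Finset.add_sum_erase _ _ (Finset.mem_univ (0 : Fin r)), fourierSum,
    add_mul, Finset.sum_add_distrib]
  simp

lemma sum_fourierSum_tail (a : (Fin (n + 1) → Fin r) → ℂ) (x : Fin n → Fin r) :
    ∑ x₀ : Fin r, fourierSum
      (fun S => ∑ b ∈ univ.erase 0, omg r ^ (b.val * x₀.val) * a (Fin.cons b S)) x = 0 := by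
  simp_rw [fourierSum, Finset.sum_mul]
  rw [Finset.sum_comm]
  refine Finset.sum_eq_zero fun S _ => ?_
  rw [Finset.sum_comm]
  refine Finset.sum_eq_zero fun b hb => ?_
  simp_rw [mul_assoc, ← Finset.sum_mul, sum_omg_pow_mul, if_neg (Finset.ne_of_mem_erase hb),
    zero_mul]

lemma FourierDegreeLE.cons_zero {k : ℕ} {a : (Fin (n + 1) → Fin r) → ℂ}
    (ha : FourierDegreeLE k a) : FourierDegreeLE k fun S => a (Fin.cons 0 S) := fun S hS => by
  simpa [suppCard_cons] using ha _ hS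

lemma FourierDegreeLE.tail {k : ℕ} {a : (Fin (n + 1) → Fin r) → ℂ}
    (ha : FourierDegreeLE (k + 1) a) (c : Fin r → ℂ) :
    FourierDegreeLE k fun S => ∑ b ∈ univ.erase 0, c b * a (Fin.cons b S) := fun S hS => by
  obtain ⟨b, hb, hab⟩ := Finset.exists_ne_zero_of_sum_ne_zero hS
  have := ha _ (right_ne_zero_of_mul hab)
  rw [suppCard_cons, if_neg (Finset.ne_of_mem_erase hb)] at this
  omega

end Slices

section Hypercontractivity

variable {α β : Type*} [Fintype α] [Fintype β]

lemma norm_add_pow_four_le (g d : ℂ) :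
    ‖g + d‖ ^ 4 ≤ ‖g‖ ^ 4 + 8 * ‖g‖ ^ 2 * ‖d‖ ^ 2 + 3 * ‖d‖ ^ 4 +
      4 * ‖g‖ ^ 2 * (g * starRingEnd ℂ d).re := by
  set c := (g * starRingEnd ℂ d).re
  have hadd : ‖g + d‖ ^ 2 = ‖g‖ ^ 2 + ‖d‖ ^ 2 + 2 * c := by
    simp only [Complex.sq_norm, Complex.normSq_add, c]
  have hsub : 0 ≤ ‖g‖ ^ 2 + ‖d‖ ^ 2 - 2 * c := by
    have := Complex.normSq_nonneg (g - d)
    simp only [Complex.sq_norm, Complex.normSq_sub] at this ⊢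
    linarith
  have hc : c ^ 2 ≤ ‖g‖ ^ 2 * ‖d‖ ^ 2 := by
    rw [← mul_pow, ← Complex.norm_conj d, ← norm_mul, ← sq_abs]
    exact pow_le_pow_left₀ (abs_nonneg _) (Complex.abs_re_le_norm _) 2
  have h4 : ‖g + d‖ ^ 4 = (‖g + d‖ ^ 2) ^ 2 := by ring
  rw [h4, hadd]
  nlinarith [mul_nonneg hsub (sq_nonneg ‖d‖)]

lemma sum_re_mul_conj_eq_zero (g : ℂ) {D : α → ℂ} (hD : ∑ x, D x = 0) :
    ∑ x, (g * starRingEnd ℂ (D x)).re = 0 := by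
  rw [← Complex.re_sum, ← Finset.mul_sum, ← map_sum, hD, map_zero, mul_zero, Complex.zero_re]

lemma sum_norm_add_sq (g : ℂ) {D : α → ℂ} (hD : ∑ x, D x = 0) :
    ∑ x, ‖g + D x‖ ^ 2 = Fintype.card α * ‖g‖ ^ 2 + ∑ x, ‖D x‖ ^ 2 := by
  have hre := sum_re_mul_conj_eq_zero g hD
  simp only [Complex.sq_norm, Complex.normSq_add, Finset.sum_add_distrib] at hre ⊢
  rw [← Finset.mul_sum, hre]
  simp

lemma sum_norm_add_pow_four_le (g : ℂ) {D : α → ℂ} (hD : ∑ x, D x = 0) :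
    ∑ x, ‖g + D x‖ ^ 4 ≤
      Fintype.card α * ‖g‖ ^ 4 + 8 * ‖g‖ ^ 2 * ∑ x, ‖D x‖ ^ 2 + 3 * ∑ x, ‖D x‖ ^ 4 := by
  refine (Finset.sum_le_sum fun x _ => norm_add_pow_four_le g (D x)).trans_eq ?_
  simp only [Finset.sum_add_distrib, ← Finset.mul_sum, sum_re_mul_conj_eq_zero g hD]
  simp

lemma mul_sum_sum_norm_pow_four_le {N c : ℝ} {D : α → β → ℂ}
    (hD : ∀ x, N * ∑ y, ‖D x y‖ ^ 4 ≤ c * (∑ y, ‖D x y‖ ^ 2) ^ 2) (hc : 0 ≤ c) :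
    N * ∑ x, ∑ y, ‖D x y‖ ^ 4 ≤ c * (∑ x, ∑ y, ‖D x y‖ ^ 2) ^ 2 := by
  rw [Finset.mul_sum]
  refine (Finset.sum_le_sum fun x _ => hD x).trans ?_
  rw [← Finset.mul_sum]
  exact mul_le_mul_of_nonneg_left
    (Finset.sum_sq_le_sq_sum_of_nonneg fun _ _ => by positivity) hc

lemma sq_sum_norm_sq_mul_sum_norm_sq_le (G : β → ℂ) (D : α → β → ℂ) :
    (∑ y, ‖G y‖ ^ 2 * ∑ x, ‖D x y‖ ^ 2) ^ 2 ≤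
      (∑ y, ‖G y‖ ^ 4) * (Fintype.card α * ∑ y, ∑ x, ‖D x y‖ ^ 4) := by
  have hCS := Finset.sum_mul_sq_le_sq_mul_sq univ (fun y => ‖G y‖ ^ 2) fun y => ∑ x, ‖D x y‖ ^ 2
  simp only [← pow_mul] at hCS
  refine hCS.trans (mul_le_mul_of_nonneg_left ?_ (by positivity))
  rw [Finset.mul_sum]
  refine Finset.sum_le_sum fun y _ => ?_
  have h := sq_sum_le_card_mul_sum_sq (s := univ) (f := fun x => ‖D x y‖ ^ 2)
  simp only [← pow_mul, Finset.card_univ] at h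
  exact h

lemma hypercontractive_step {N C : ℝ} {k : ℕ} (hN : 0 ≤ N) (hC : 16 * (Fintype.card α : ℝ) ≤ C)
    (G : β → ℂ) (D : α → β → ℂ) (hD : ∀ y, ∑ x, D x y = 0)
    (hG : N * ∑ y, ‖G y‖ ^ 4 ≤ C ^ (k + 1) * (∑ y, ‖G y‖ ^ 2) ^ 2)
    (hDk : ∀ x, N * ∑ y, ‖D x y‖ ^ 4 ≤ C ^ k * (∑ y, ‖D x y‖ ^ 2) ^ 2) :
    ((Fintype.card α : ℝ) * N) * ∑ y, ∑ x, ‖G y + D x y‖ ^ 4 ≤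
      C ^ (k + 1) * (∑ y, ∑ x, ‖G y + D x y‖ ^ 2) ^ 2 := by
  set m : ℝ := (Fintype.card α : ℝ)
  set q : β → ℝ := fun y => ∑ x, ‖D x y‖ ^ 2
  set A := ∑ y, ‖G y‖ ^ 2
  set B := ∑ y, q y
  set D4 := ∑ y, ∑ x, ‖D x y‖ ^ 4
  set X := ∑ y, ‖G y‖ ^ 2 * q y
  have hm : 0 ≤ m := Nat.cast_nonneg _
  have hC0 : 0 ≤ C := by linarith
  have h2 : ∑ y, ∑ x, ‖G y + D x y‖ ^ 2 = m * A + B := by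
    simp only [sum_norm_add_sq _ (hD _), Finset.sum_add_distrib, Finset.mul_sum, m, A, B, q]
  have h4 : ∑ y, ∑ x, ‖G y + D x y‖ ^ 4 ≤ m * ∑ y, ‖G y‖ ^ 4 + 8 * X + 3 * D4 := by
    refine (Finset.sum_le_sum fun y _ => sum_norm_add_pow_four_le _ (hD y)).trans_eq ?_
    simp only [Finset.sum_add_distrib, Finset.mul_sum, X, D4, m, q, mul_assoc]
  have hD4 : N * D4 ≤ C ^ k * B ^ 2 := by
    have h := mul_sum_sum_norm_pow_four_le hDk (by positivity)
    rwa [Finset.sum_comm, Finset.sum_comm (f := fun x y => ‖D x y‖ ^ 2)] at h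
  -- Cauchy–Schwarz in `y` controls the cross term; this is where `16 * m ≤ C` is needed.
  have hX : 4 * (N * X) ≤ C ^ (k + 1) * A * B := by
    have hCS : X ^ 2 ≤ (∑ y, ‖G y‖ ^ 4) * (m * D4) := sq_sum_norm_sq_mul_sum_norm_sq_le G D
    refine le_of_pow_le_pow_left₀ two_ne_zero (by positivity) ?_
    calc (4 * (N * X)) ^ 2 = 16 * N ^ 2 * X ^ 2 := by ring
      _ ≤ 16 * N ^ 2 * ((∑ y, ‖G y‖ ^ 4) * (m * D4)) := by gcongr
      _ = 16 * (N * ∑ y, ‖G y‖ ^ 4) * (m * (N * D4)) := by ring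
      _ ≤ 16 * (C ^ (k + 1) * A ^ 2) * (m * (C ^ k * B ^ 2)) := by gcongr
      _ = (16 * m) * (C ^ k * C ^ k * C * A ^ 2 * B ^ 2) := by ring
      _ ≤ C * (C ^ k * C ^ k * C * A ^ 2 * B ^ 2) := by gcongr
      _ = (C ^ (k + 1) * A * B) ^ 2 := by ring
  have hCk : 3 * m * C ^ k ≤ C ^ (k + 1) := by
    rw [pow_succ, mul_comm]; gcongr; linarith
  calc (m * N) * ∑ y, ∑ x, ‖G y + D x y‖ ^ 4
      ≤ m ^ 2 * (N * ∑ y, ‖G y‖ ^ 4) + 2 * m * (4 * (N * X)) + 3 * m * (N * D4) := by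
        nlinarith [mul_le_mul_of_nonneg_left h4 (mul_nonneg hm hN)]
    _ ≤ m ^ 2 * (C ^ (k + 1) * A ^ 2) + 2 * m * (C ^ (k + 1) * A * B) +
          3 * m * (C ^ k * B ^ 2) := by
        gcongr
    _ ≤ C ^ (k + 1) * (m * A + B) ^ 2 := by
        nlinarith [mul_le_mul_of_nonneg_right hCk (sq_nonneg B)]
    _ = C ^ (k + 1) * (∑ y, ∑ x, ‖G y + D x y‖ ^ 2) ^ 2 := by rw [h2]

end Hypercontractivity

section Bonami

variable {r : ℕ} [NeZero r]

lemma sum_norm_fourierSum_pow_four_of_degreeLE_zero {n : ℕ} {a : (Fin n → Fin r) → ℂ}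
    (ha : FourierDegreeLE 0 a) :
    (r : ℝ) ^ n * ∑ x, ‖fourierSum a x‖ ^ 4 = (∑ x, ‖fourierSum a x‖ ^ 2) ^ 2 := by
  simp only [fourierSum_eq_const_of_degreeLE_zero ha, Finset.sum_const, Finset.card_univ,
    Fintype.card_fun, Fintype.card_fin, nsmul_eq_mul]
  push_cast
  ring

theorem hypercontractive {n k : ℕ} {a : (Fin n → Fin r) → ℂ} (ha : FourierDegreeLE k a) :
    (r : ℝ) ^ n * ∑ x, ‖fourierSum a x‖ ^ 4 ≤
      (16 * r) ^ k * (∑ x, ‖fourierSum a x‖ ^ 2) ^ 2 := by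
  have hr : (1 : ℝ) ≤ r := Nat.one_le_cast.2 (Nat.pos_of_neZero r)
  have of_degreeLE_zero : ∀ {n k : ℕ} {a : (Fin n → Fin r) → ℂ}, FourierDegreeLE 0 a →
      (r : ℝ) ^ n * ∑ x, ‖fourierSum a x‖ ^ 4 ≤ (16 * r) ^ k * (∑ x, ‖fourierSum a x‖ ^ 2) ^ 2 :=
    fun ha => (sum_norm_fourierSum_pow_four_of_degreeLE_zero ha).le.trans
      (le_mul_of_one_le_left (by positivity) (one_le_pow₀ (by linarith)))
  induction n generalizing k with
  | zero => exact of_degreeLE_zero fun S _ => by simp [suppCard]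
  | succ n ih =>
    cases k with
    | zero => exact of_degreeLE_zero ha
    | succ k =>
      have step := hypercontractive_step (N := (r : ℝ) ^ n) (C := 16 * r) (by positivity)
        (by simp) _ _ (sum_fourierSum_tail a) (ih ha.cons_zero) fun x₀ => ih (ha.tail _)
      rw [pow_succ', Fintype.sum_fin_succ_pi, Fintype.sum_fin_succ_pi]
      simpa only [fourierSum_cons_eq_add, Fintype.card_fin, mul_assoc] using step

end Bonami

lemma sum_mul_pow_four_le {ι : Type*} [Fintype ι] {f w : ι → ℝ} (hf : ∀ i, 0 ≤ f i)
    (hw : ∀ i, 0 ≤ w i) :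
    (∑ i, f i * w i) ^ 4 ≤ (∑ i, f i ^ (4 / 3 : ℝ)) ^ 3 * ∑ i, w i ^ 4 := by
  have hpq : (4 / 3 : ℝ).HolderConjugate 4 := Real.holderConjugate_iff.2 ⟨by norm_num, by norm_num⟩
  have hF : 0 ≤ ∑ i, f i ^ (4 / 3 : ℝ) := Finset.sum_nonneg fun i _ => Real.rpow_nonneg (hf i) _
  have hW : 0 ≤ ∑ i, w i ^ 4 := Finset.sum_nonneg fun i _ => pow_nonneg (hw i) 4
  have h := Real.inner_le_Lp_mul_Lq_of_nonneg univ hpq (fun i _ => hf i) fun i _ => hw i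
  simp only [Real.rpow_ofNat] at h
  calc (∑ i, f i * w i) ^ 4
      ≤ ((∑ i, f i ^ (4 / 3 : ℝ)) ^ (1 / (4 / 3) : ℝ) * (∑ i, w i ^ 4) ^ (1 / 4 : ℝ)) ^ 4 :=
        pow_le_pow_left₀ (Finset.sum_nonneg fun i _ => mul_nonneg (hf i) (hw i)) h 4
    _ = (∑ i, f i ^ (4 / 3 : ℝ)) ^ 3 * ∑ i, w i ^ 4 := by
        rw [mul_pow, ← Real.rpow_mul_natCast hF, ← Real.rpow_mul_natCast hW]
        norm_num

lemma Lnorm_four_thirds_pow_four {n r : ℕ} (g : (Fin n → Fin r) → ℂ) :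
    Lnorm (4 / 3) g ^ 4 = ((∑ x, ‖g x‖ ^ (4 / 3 : ℝ)) / r ^ n) ^ 3 := by
  rw [Lnorm, ← Real.rpow_mul_natCast
    (div_nonneg (Finset.sum_nonneg fun _ _ => by positivity) (by positivity))]
  norm_num

section Projection

variable {n r : ℕ} [NeZero r] (g : (Fin n → Fin r) → ℂ) (𝒮 : Finset (Fin n → Fin r))

lemma sum_norm_fourierSum_ite_fhat_sq :
    ∑ x, ‖fourierSum (fun S => if S ∈ 𝒮 then fhat g S else 0) x‖ ^ 2 =
      (r : ℝ) ^ n * ∑ S ∈ 𝒮, ‖fhat g S‖ ^ 2 := by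
  rw [sum_norm_fourierSum_sq]
  simp [apply_ite, Finset.sum_ite_mem]

lemma mul_sum_norm_fhat_sq_le :
    (r : ℝ) ^ n * ∑ S ∈ 𝒮, ‖fhat g S‖ ^ 2 ≤
      ∑ x, ‖g x‖ * ‖fourierSum (fun S => if S ∈ 𝒮 then fhat g S else 0) x‖ := by
  have h := sum_mul_conj_fourierSum g fun S => if S ∈ 𝒮 then fhat g S else 0
  have hS : ∑ S, fhat g S * starRingEnd ℂ (if S ∈ 𝒮 then fhat g S else 0) =
      ((∑ S ∈ 𝒮, ‖fhat g S‖ ^ 2 : ℝ) : ℂ) := by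
    simp [apply_ite, Complex.mul_conj', Finset.sum_ite_mem]
  rw [hS] at h
  calc (r : ℝ) ^ n * ∑ S ∈ 𝒮, ‖fhat g S‖ ^ 2 =
        ‖∑ x, g x * starRingEnd ℂ (fourierSum (fun S => if S ∈ 𝒮 then fhat g S else 0) x)‖ := by
        rw [h, norm_mul, norm_pow, Complex.norm_natCast, Complex.norm_real,
          Real.norm_of_nonneg (Finset.sum_nonneg fun _ _ => by positivity)]
    _ ≤ _ := norm_sum_le _ _
    _ = _ := by simp only [norm_mul, Complex.norm_conj]

theorem sq_sum_norm_fhat_sq_le (k : ℕ) (h𝒮 : ∀ S ∈ 𝒮, suppCard S ≤ k) :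
    (∑ S ∈ 𝒮, ‖fhat g S‖ ^ 2) ^ 2 ≤ (16 * r) ^ k * Lnorm (4 / 3) g ^ 4 := by
  set W := fourierSum fun S => if S ∈ 𝒮 then fhat g S else 0
  set M := ∑ S ∈ 𝒮, ‖fhat g S‖ ^ 2
  set N : ℝ := (r : ℝ) ^ n
  set L := ∑ x, ‖g x‖ ^ (4 / 3 : ℝ)
  have hN : 0 < N := pow_pos (Nat.cast_pos.2 (Nat.pos_of_neZero r)) n
  have hM : 0 ≤ M := Finset.sum_nonneg fun _ _ => by positivity
  have hL : 0 ≤ L := Finset.sum_nonneg fun _ _ => by positivity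
  have hW4 : N * ∑ x, ‖W x‖ ^ 4 ≤ (16 * r) ^ k * (N * M) ^ 2 := by
    rw [← sum_norm_fourierSum_ite_fhat_sq]
    exact hypercontractive fun S hS => h𝒮 S (by by_contra h; simp [h] at hS)
  have key : (M ^ 2 * N ^ 3) * (N ^ 2 * M ^ 2) ≤ ((16 * r) ^ k * L ^ 3) * (N ^ 2 * M ^ 2) := by
    calc (M ^ 2 * N ^ 3) * (N ^ 2 * M ^ 2) = N * (N * M) ^ 4 := by ring
      _ ≤ N * (L ^ 3 * ∑ x, ‖W x‖ ^ 4) := by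
        gcongr
        exact (pow_le_pow_left₀ (by positivity) (mul_sum_norm_fhat_sq_le g 𝒮) 4).trans
          (sum_mul_pow_four_le (fun _ => norm_nonneg _) fun _ => norm_nonneg _)
      _ = L ^ 3 * (N * ∑ x, ‖W x‖ ^ 4) := by ring
      _ ≤ L ^ 3 * ((16 * r) ^ k * (N * M) ^ 2) := by gcongr
      _ = ((16 * r) ^ k * L ^ 3) * (N ^ 2 * M ^ 2) := by ring
  rw [Lnorm_four_thirds_pow_four, div_pow, mul_div_assoc', le_div_iff₀ (by positivity)]
  rcases hM.eq_or_lt with h0 | hpos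
  · rw [← h0, zero_pow two_ne_zero, zero_mul]; positivity
  · exact le_of_mul_le_mul_right key (by positivity)

end Projection

theorem stmt_17_general {n : ℕ} (r : ℕ) [NeZero r]
    (f : (Fin n → Fin r) → ℝ) (k : ℕ) :
    ∑ S ∈ Finset.univ.filter fun S => suppCard S = k,
        ‖fhat (fun y => (f y : ℂ)) S‖ ^ 2 ≤
      ((9 / 2) * (r : ℝ) ^ 3) ^ (2 * k) * (Lnorm (4 / 3) fun y => (f y : ℂ)) ^ 2 := by
  have hr : (1 : ℝ) ≤ r := Nat.one_le_cast.2 (Nat.pos_of_neZero r)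
  have hC : 16 * (r : ℝ) ≤ ((9 / 2) * (r : ℝ) ^ 3) ^ 4 := by
    nlinarith [le_self_pow₀ hr (by norm_num : (12 : ℕ) ≠ 0)]
  refine le_of_pow_le_pow_left₀ two_ne_zero (by positivity) ?_
  calc _ ≤ (16 * (r : ℝ)) ^ k * (Lnorm (4 / 3) fun y => (f y : ℂ)) ^ 4 :=
        sq_sum_norm_fhat_sq_le _ _ k fun S hS => (Finset.mem_filter.1 hS).2.le
    _ ≤ (((9 / 2) * (r : ℝ) ^ 3) ^ 4) ^ k * (Lnorm (4 / 3) fun y => (f y : ℂ)) ^ 4 := by gcongr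
    _ = _ := by generalize (9 / 2) * (r : ℝ) ^ 3 = X; ring

theorem stmt_17 {n : ℕ} (r : ℕ) [NeZero r] (hr : 2 ≤ r)
    (f : (Fin n → Fin r) → ℝ) (k : ℕ) (hk1 : 1 ≤ k) (hkn : k ≤ n) :
    ∑ S ∈ Finset.univ.filter fun S => suppCard S = k,
        ‖fhat (fun y => (f y : ℂ)) S‖ ^ 2 ≤
      ((9 / 2) * (r : ℝ) ^ 3) ^ (2 * k) * (Lnorm (4 / 3) fun y => (f y : ℂ)) ^ 2 :=
  stmt_17_general r f k
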